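/- arXiv:2307.03746 — 2 statements merged into one kernel-verified Lean document; each statement's English description precedes it below -/
import Mathlib

section
/- Let α ∈ (1/2,1) and m = α/(1-α). The series η(α) := (1/(m+1)) Σ_{n≥0} (m-1)/(m^{n+1}-1) tends to +∞ as α → (1/2)^+, and consequently p_c(α) = η/(1+η) → 1 as α → (1/2)^+. -/
/-!
For `m > 1` the `n`-th summand `(m - 1) / (m ^ (n + 1) - 1)` equals `1 / (1 + m + ⋯ + mⁿ)`,
which is dominated by `m⁻ⁿ` and tends to `1 / (n + 1)` as `m → 1`. Hence every partial sum of the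
series converges to a harmonic number as `m ↓ 1`, so by the divergence of the harmonic series the
nonnegative series exceeds any bound near `m = 1`. Since `α ↦ α / (1 - α)` maps `α ↓ 1/2` to
`m ↓ 1`, `η → ∞`, and then `η / (1 + η) = 1 - 1 / (1 + η) → 1`.
-/

open Filter Topology Finset

theorem sub_one_div_pow_succ_sub_one_eq_inv_geom_sum {K : Type*} [Field K] {m : K} (hm : m ≠ 1)
    (n : ℕ) :
    (m - 1) / (m ^ (n + 1) - 1) = (∑ i ∈ range (n + 1), m ^ i)⁻¹ := by
  rw [← geom_sum_mul, div_mul_cancel_right₀ (sub_ne_zero.2 hm)]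

theorem sub_one_div_pow_succ_sub_one_nonneg {m : ℝ} (hm : 1 ≤ m) (n : ℕ) :
    0 ≤ (m - 1) / (m ^ (n + 1) - 1) :=
  div_nonneg (sub_nonneg.2 hm) (sub_nonneg.2 (one_le_pow₀ hm))

theorem summable_sub_one_div_pow_succ_sub_one {m : ℝ} (hm : 1 < m) :
    Summable fun n : ℕ ↦ (m - 1) / (m ^ (n + 1) - 1) := by
  refine (summable_geometric_of_lt_one (by positivity) (inv_lt_one_of_one_lt₀ hm)).of_nonneg_of_le
    (sub_one_div_pow_succ_sub_one_nonneg hm.le) fun n ↦ ?_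
  rw [sub_one_div_pow_succ_sub_one_eq_inv_geom_sum hm.ne', inv_pow]
  exact inv_anti₀ (by positivity) <| single_le_sum (f := (m ^ ·))
    (fun i _ ↦ by positivity) (self_mem_range_succ n)

theorem tendsto_sum_range_inv_geom_sum_nhds_one (N : ℕ) :
    Tendsto (fun m : ℝ ↦ ∑ n ∈ range N, (∑ i ∈ range (n + 1), m ^ i)⁻¹) (𝓝 1)
      (𝓝 (∑ n ∈ range N, 1 / ((n : ℝ) + 1))) := by
  refine tendsto_finsetSum _ fun n _ ↦ ?_
  have h := (continuous_finsetSum (range (n + 1)) fun i _ ↦ continuous_pow i).tendsto (1 : ℝ)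
  simp only [one_pow, sum_const, card_range, nsmul_eq_mul, mul_one, Nat.cast_add_one] at h
  simpa only [one_div] using h.inv₀ (by positivity)

theorem tendsto_tsum_sub_one_div_pow_succ_sub_one :
    Tendsto (fun m : ℝ ↦ ∑' n : ℕ, (m - 1) / (m ^ (n + 1) - 1)) (𝓝[>] 1) atTop := by
  refine tendsto_atTop.2 fun b ↦ ?_
  obtain ⟨N, hN⟩ := (Real.tendsto_sum_range_one_div_nat_succ_atTop.eventually_gt_atTop b).exists
  filter_upwards [self_mem_nhdsWithin, nhdsWithin_le_nhds
    ((tendsto_sum_range_inv_geom_sum_nhds_one N).eventually_const_lt hN)] with m (hm : 1 < m) hb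
  calc b ≤ ∑ n ∈ range N, (∑ i ∈ range (n + 1), m ^ i)⁻¹ := hb.le
    _ = ∑ n ∈ range N, (m - 1) / (m ^ (n + 1) - 1) := by
      simp only [sub_one_div_pow_succ_sub_one_eq_inv_geom_sum hm.ne']
    _ ≤ _ := (summable_sub_one_div_pow_succ_sub_one hm).sum_le_tsum _
      fun n _ ↦ sub_one_div_pow_succ_sub_one_nonneg hm.le n

theorem tendsto_one_div_add_one_mul_tsum_nhdsGT_one :
    Tendsto (fun m : ℝ ↦ 1 / (m + 1) * ∑' n : ℕ, (m - 1) / (m ^ (n + 1) - 1)) (𝓝[>] 1) atTop := by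
  have h : Tendsto (fun m : ℝ ↦ 1 / (m + 1)) (𝓝 1) (𝓝 (1 / 2)) := by
    have := ((continuous_add_const (1 : ℝ)).tendsto 1).inv₀ (by norm_num)
    simpa [one_div, one_add_one_eq_two] using this
  exact (h.mono_left nhdsWithin_le_nhds).pos_mul_atTop (by norm_num)
    tendsto_tsum_sub_one_div_pow_succ_sub_one

theorem tendsto_div_one_sub_nhdsGT_half :
    Tendsto (fun α : ℝ ↦ α / (1 - α)) (𝓝[>] (1 / 2)) (𝓝[>] 1) := by
  refine tendsto_nhdsWithin_iff.2 ⟨?_, ?_⟩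
  · have h : ContinuousAt (fun α : ℝ ↦ α / (1 - α)) (1 / 2) :=
      continuousAt_id.div (continuousAt_const.sub continuousAt_id) (by norm_num)
    convert h.tendsto.mono_left nhdsWithin_le_nhds using 2
    norm_num
  · filter_upwards [self_mem_nhdsWithin,
      nhdsWithin_le_nhds (Iio_mem_nhds (by norm_num : (1 / 2 : ℝ) < 1))] with α (hα : 1 / 2 < α) hα1
    rw [Set.mem_Ioi, one_lt_div (by linarith [hα1.out])]
    linarith

theorem tendsto_div_one_add_atTop {𝕜 : Type*} [Field 𝕜] [LinearOrder 𝕜] [IsStrictOrderedRing 𝕜]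
    [TopologicalSpace 𝕜] [OrderTopology 𝕜] :
    Tendsto (fun x : 𝕜 ↦ x / (1 + x)) atTop (𝓝 1) := by
  have h : Tendsto (fun x : 𝕜 ↦ 1 - (1 + x)⁻¹) atTop (𝓝 (1 - 0)) :=
    tendsto_const_nhds.sub (tendsto_atTop_add_const_left atTop 1 tendsto_id).inv_tendsto_atTop
  rw [sub_zero] at h
  refine h.congr' ?_
  filter_upwards [eventually_gt_atTop 0] with x hx
  field_simp
  ring

/-- As `α → (1/2)^+`, the quantity `η(α) = (1/(m+1)) Σ_{n≥0} (m-1)/(m^(n+1)-1)` with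
`m = α/(1-α)` tends to `+∞`, and consequently `p_c(α) = η/(1+η)` tends to `1`. -/
theorem critical_point_tendsto_one
    (η pc : ℝ → ℝ)
    (hη : ∀ α : ℝ, η α = (1 / (α / (1 - α) + 1)) *
      ∑' n : ℕ, (α / (1 - α) - 1) / ((α / (1 - α)) ^ (n + 1) - 1))
    (hpc : ∀ α : ℝ, pc α = η α / (1 + η α)) :
    Tendsto η (nhdsWithin (1/2 : ℝ) (Set.Ioi (1/2 : ℝ))) atTop ∧
      Tendsto pc (nhdsWithin (1/2 : ℝ) (Set.Ioi (1/2 : ℝ))) (nhds 1) := by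
  have hη_lim : Tendsto η (𝓝[>] (1 / 2)) atTop := by
    rw [funext hη]
    exact tendsto_one_div_add_one_mul_tsum_nhdsGT_one.comp tendsto_div_one_sub_nhdsGT_half
  refine ⟨hη_lim, ?_⟩
  rw [funext hpc]
  exact tendsto_div_one_add_atTop.comp hη_lim
end

section
/- Let (S_n) be a random walk on ℤ started at 0 with i.i.d. increments X_i satisfying P(X_1 = 1) > 0, P(X_1 ≥ 2) = 0 (skip-free ascending), E|X_1| < ∞ and E[X_1] > 0. Let T' = inf{n ≥ 1 : S_n ≤ 0}. Then P(T' = ∞) = E[X_1]. -/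
/-!
Call `n ≥ 1` a ladder epoch of the walk if `S n > S k` for all `k < n`. Since the walk climbs
only by unit steps, the number of ladder epochs up to `N` is `max_{k ≤ N} S k`, which the strong
law of large numbers makes `≈ N E[X₁]`. Reversing the increments `X₁, …, Xₙ` preserves their
joint law and turns "`n` is a ladder epoch" into "the walk stays positive up to time `n`", so the
expected number of ladder epochs up to `N` is `∑_{n ≤ N} P(T' > n) ≈ N P(T' = ∞)`. The count is
at most `N`, so bounded convergence identifies the two limits.
-/

open MeasureTheory ProbabilityTheory Filter Finset Topology

-- `n ∈ range N` records the ladder epoch `n + 1 ∈ [1, N]`.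
def ladderCount (s : ℕ → ℤ) (N : ℕ) : ℕ := #{n ∈ range N | ∀ k ≤ n, s k < s (n + 1)}

lemma ladderCount_succ (s : ℕ → ℤ) (N : ℕ) :
    ladderCount s (N + 1) = ladderCount s N + if ∀ k ≤ N, s k < s (N + 1) then 1 else 0 := by
  unfold ladderCount
  rw [range_add_one, filter_insert]
  split_ifs <;> simp [card_insert_of_notMem]

lemma partialSups_lt_iff {α : Type*} [LinearOrder α] {s : ℕ → α} {N : ℕ} {a : α} :
    partialSups s N < a ↔ ∀ k ≤ N, s k < a := by
  simp [partialSups_eq_sup'_range]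

lemma ladderCount_eq_partialSups {s : ℕ → ℤ} (h0 : s 0 = 0)
    (hstep : ∀ k, s (k + 1) ≤ s k + 1) (N : ℕ) :
    (ladderCount s N : ℤ) = partialSups s N := by
  induction N with
  | zero => simp [ladderCount, h0]
  | succ N ih =>
    have hsucc : partialSups s (N + 1) = partialSups s N ⊔ s (N + 1) := partialSups_succ s N
    have hle : s (N + 1) ≤ partialSups s N + 1 := (hstep N).trans (by grw [le_partialSups s N])
    rw [ladderCount_succ, hsucc]
    split_ifs with h <;> rw [← partialSups_lt_iff] at h <;> push_cast <;> omega

lemma ladderCount_le (s : ℕ → ℤ) (N : ℕ) : ladderCount s N ≤ N :=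
  (card_filter_le _ _).trans (card_range N).le

lemma Int.cast_partialSups (s : ℕ → ℤ) (N : ℕ) :
    ((partialSups s N : ℤ) : ℝ) = partialSups (fun k => (s k : ℝ)) N := by
  induction N with
  | zero => simp
  | succ N ih => simp [ih]

lemma tendsto_partialSups_div {s : ℕ → ℝ} {m : ℝ} (hm : 0 ≤ m)
    (hs : Tendsto (fun n => s n / n) atTop (𝓝 m)) :
    Tendsto (fun n => partialSups s n / n) atTop (𝓝 m) := by
  refine tendsto_order.2 ⟨fun a ha => ?_, fun b hb => ?_⟩
  · filter_upwards [hs.eventually (eventually_gt_nhds ha)] with n hn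
    exact hn.trans_le (by gcongr; exact le_partialSups s n)
  · obtain ⟨c, hmc, hcb⟩ := exists_between hb
    obtain ⟨K, hK⟩ := eventually_atTop.1 <|
      (hs.eventually (eventually_lt_nhds hmc)).and (eventually_gt_atTop 0)
    have hbound : ∀ n, partialSups s n ≤ max (partialSups s K) (c * n) := by
      refine fun n => partialSups_le s n _ fun k hkn => ?_
      rcases le_total k K with hkK | hKk
      · exact (le_partialSups_of_le s hkK).trans (le_max_left _ _)
      · obtain ⟨hk, hk0⟩ := hK k hKk
        have hk0 : (0 : ℝ) < k := Nat.cast_pos.2 hk0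
        rw [div_lt_iff₀ hk0] at hk
        refine le_max_of_le_right (hk.le.trans ?_)
        gcongr
        linarith
    have hlim : Tendsto (fun n : ℕ => max (partialSups s K / n) c) atTop (𝓝 (max 0 c)) :=
      (tendsto_const_div_atTop_nhds_zero_nat _).max tendsto_const_nhds
    rw [max_eq_right (hm.trans hmc.le)] at hlim
    filter_upwards [hlim.eventually (eventually_lt_nhds hcb), eventually_gt_atTop 0]
      with n hn hn0
    have hn0 : (0 : ℝ) < n := Nat.cast_pos.2 hn0
    calc partialSups s n / n ≤ max (partialSups s K) (c * n) / n := by gcongr; exact hbound n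
      _ = max (partialSups s K / n) c := by
        rw [← max_div_div_right hn0.le, mul_div_cancel_right₀ _ hn0.ne']
      _ < b := hn

-- Extended by the identity beyond `n` so as to be injective on all of `ℕ`.
def reflectIic (n i : ℕ) : ℕ := if i ≤ n then n - i else i

lemma reflectIic_injective (n : ℕ) : Function.Injective (reflectIic n) := by
  intro a b h
  unfold reflectIic at h
  split_ifs at h <;> omega

lemma sum_range_reflectIic {M : Type*} [AddCommGroup M] (x : ℕ → M) {j n : ℕ} (hjn : j ≤ n) :
    ∑ i ∈ range (j + 1), x (reflectIic n i) =
      ∑ i ∈ range (n + 1), x i - ∑ i ∈ range (n - j), x i := by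
  rw [← sum_Ico_eq_sub _ (by omega), ← Nat.Ico_zero_eq_range,
    sum_congr rfl fun i hi => by rw [reflectIic, if_pos (by simp at hi; omega)],
    sum_Ico_reflect x 0 (by omega)]
  congr 2; omega

lemma forall_lt_sum_range_iff_forall_pos_sum_reflectIic (x : ℕ → ℤ) (n : ℕ) :
    (∀ k ≤ n, ∑ i ∈ range k, x i < ∑ i ∈ range (n + 1), x i) ↔
      ∀ j ≤ n, 0 < ∑ i ∈ range (j + 1), x (reflectIic n i) := by
  constructor
  · intro h j hj
    rw [sum_range_reflectIic x hj, sub_pos]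
    exact h _ (Nat.sub_le n j)
  · intro h k hk
    have := h (n - k) (Nat.sub_le n k)
    rwa [sum_range_reflectIic x (Nat.sub_le n k), Nat.sub_sub_self hk, sub_pos] at this

section Probability

variable {Ω : Type*} [MeasurableSpace Ω] {μ : Measure Ω}

lemma ProbabilityTheory.iIndepFun.identDistrib_comp {ι κ β : Type*} [MeasurableSpace β]
    {X : ι → Ω → β}
    (hmeas : ∀ i, Measurable (X i)) (hindep : iIndepFun X μ) {i₀ : ι}
    (hident : ∀ i, IdentDistrib (X i) (X i₀) μ μ) {σ τ : κ → ι}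
    (hσ : σ.Injective) (hτ : τ.Injective) :
    IdentDistrib (fun ω k => X (σ k) ω) (fun ω k => X (τ k) ω) μ μ where
  aemeasurable_fst := (measurable_pi_lambda _ fun k => hmeas (σ k)).aemeasurable
  aemeasurable_snd := (measurable_pi_lambda _ fun k => hmeas (τ k)).aemeasurable
  map_eq := by
    rw [(hindep.precomp hσ).map_fun_eq_infinitePi_map (fun k => hmeas (σ k)),
      (hindep.precomp hτ).map_fun_eq_infinitePi_map (fun k => hmeas (τ k))]
    simp only [(hident _).map_eq]

lemma measurable_card_filter_mem {ι : Type*} (s : Finset ι) {A : ι → Set Ω}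
    [∀ i, DecidablePred (· ∈ A i)] (hA : ∀ i, MeasurableSet (A i)) :
    Measurable fun ω => #{i ∈ s | ω ∈ A i} := by
  simp only [card_filter]
  exact Finset.measurable_sum s fun i _ => Measurable.ite (hA i) measurable_const measurable_const

lemma integral_card_filter_mem [IsFiniteMeasure μ] {ι : Type*} (s : Finset ι) {A : ι → Set Ω}
    [∀ i, DecidablePred (· ∈ A i)] (hA : ∀ i, MeasurableSet (A i)) :
    ∫ ω, (#{i ∈ s | ω ∈ A i} : ℝ) ∂μ = ∑ i ∈ s, μ.real (A i) := by
  have hsum : ∀ ω, (#{i ∈ s | ω ∈ A i} : ℝ) = ∑ i ∈ s, (A i).indicator 1 ω := fun ω => by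
    simp [Set.indicator_apply]
  simp_rw [hsum]
  rw [integral_finsetSum _ fun i _ => (integrable_const 1).indicator (hA i)]
  exact sum_congr rfl fun i _ => integral_indicator_one (hA i)

variable {X : ℕ → Ω → ℤ}

lemma measurable_ladderCount (hmeas : ∀ i, Measurable (X i)) (N : ℕ) :
    Measurable fun ω => ladderCount (fun k => ∑ i ∈ range k, X i ω) N :=
  measurable_card_filter_mem (range N)
    (A := fun n => {ω | ∀ k ≤ n, ∑ i ∈ range k, X i ω < ∑ i ∈ range (n + 1), X i ω})
    fun n => by measurability

lemma measure_ladderEpoch_eq (hmeas : ∀ i, Measurable (X i)) (hindep : iIndepFun X μ)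
    (hident : ∀ i, IdentDistrib (X i) (X 0) μ μ) (n : ℕ) :
    μ {ω | ∀ k ≤ n, ∑ i ∈ range k, X i ω < ∑ i ∈ range (n + 1), X i ω} =
      μ {ω | ∀ j ≤ n, 0 < ∑ i ∈ range (j + 1), X i ω} := by
  have hT : MeasurableSet {x : ℕ → ℤ | ∀ j ≤ n, 0 < ∑ i ∈ range (j + 1), x i} := by
    measurability
  simp_rw [forall_lt_sum_range_iff_forall_pos_sum_reflectIic]
  exact (hindep.identDistrib_comp hmeas hident (reflectIic_injective n)
    Function.injective_id).measure_mem_eq hT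

lemma tendsto_measure_forall_pos_sum_range [IsFiniteMeasure μ] (hmeas : ∀ i, Measurable (X i)) :
    Tendsto (fun n => μ {ω | ∀ j ≤ n, 0 < ∑ i ∈ range (j + 1), X i ω}) atTop
      (𝓝 (μ {ω | ∀ n, 1 ≤ n → 0 < ∑ i ∈ range n, X i ω})) := by
  have hinter : {ω | ∀ n, 1 ≤ n → 0 < ∑ i ∈ range n, X i ω} =
      ⋂ n, {ω | ∀ j ≤ n, 0 < ∑ i ∈ range (j + 1), X i ω} := by
    ext ω
    simp only [Set.mem_iInter, Set.mem_ofPred_eq]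
    refine ⟨fun h n j _ => h (j + 1) j.succ_pos, fun h n hn => ?_⟩
    obtain ⟨j, rfl⟩ := Nat.exists_eq_add_of_le' hn
    exact h j j le_rfl
  rw [hinter]
  exact tendsto_measure_iInter_atTop
    (fun n => (by measurability : MeasurableSet _).nullMeasurableSet)
    (fun m n hmn ω h j hj => h j (hj.trans hmn)) ⟨0, measure_ne_top μ _⟩

lemma tendsto_integral_ladderCount_div (hmeas : ∀ i, Measurable (X i)) (hindep : iIndepFun X μ)
    (hident : ∀ i, IdentDistrib (X i) (X 0) μ μ) :
    Tendsto (fun N : ℕ => ∫ ω, (ladderCount (fun k => ∑ i ∈ range k, X i ω) N : ℝ) / N ∂μ)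
      atTop (𝓝 (μ.real {ω | ∀ n, 1 ≤ n → 0 < ∑ i ∈ range n, X i ω})) := by
  have := hindep.isProbabilityMeasure
  have hcount : ∀ N, ∫ ω, (ladderCount (fun k => ∑ i ∈ range k, X i ω) N : ℝ) ∂μ =
      ∑ n ∈ range N, μ.real {ω | ∀ j ≤ n, 0 < ∑ i ∈ range (j + 1), X i ω} := fun N => by
    refine (integral_card_filter_mem (range N)
      (A := fun n => {ω | ∀ k ≤ n, ∑ i ∈ range k, X i ω < ∑ i ∈ range (n + 1), X i ω})
      fun n => by measurability).trans ?_
    simp only [measureReal_def, measure_ladderEpoch_eq hmeas hindep hident]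
  refine ((ENNReal.tendsto_toReal (measure_ne_top μ _)).comp
    (tendsto_measure_forall_pos_sum_range hmeas)).cesaro.congr fun N => ?_
  rw [integral_div, hcount, inv_mul_eq_div]
  rfl

lemma ae_tendsto_ladderCount_div (hindep : iIndepFun X μ)
    (hident : ∀ i, IdentDistrib (X i) (X 0) μ μ) (hskip : ∀ᵐ ω ∂μ, X 0 ω ≤ 1)
    (hint : Integrable (fun ω => (X 0 ω : ℝ)) μ) (hdrift : 0 ≤ ∫ ω, (X 0 ω : ℝ) ∂μ) :
    ∀ᵐ ω ∂μ, Tendsto (fun N : ℕ => (ladderCount (fun k => ∑ i ∈ range k, X i ω) N : ℝ) / N)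
      atTop (𝓝 (∫ ω, (X 0 ω : ℝ) ∂μ)) := by
  have hstep : ∀ᵐ ω ∂μ, ∀ i, X i ω ≤ 1 :=
    ae_all_iff.2 fun i => (hident i).symm.ae_snd (p := (· ≤ 1)) (by measurability) hskip
  have hslln := strong_law_ae_real (fun i ω => (X i ω : ℝ)) hint
    (fun i j hij => (hindep.indepFun hij).comp measurable_from_top measurable_from_top)
    fun i => (hident i).comp measurable_from_top
  filter_upwards [hstep, hslln] with ω hω hs
  have hmax := ladderCount_eq_partialSups (s := fun k => ∑ i ∈ range k, X i ω) (by simp)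
    fun k => by simp [sum_range_succ, hω k]
  refine (tendsto_partialSups_div (s := fun k => ((∑ i ∈ range k, X i ω : ℤ) : ℝ)) hdrift
    (by simpa using hs)).congr fun N => ?_
  rw [← Int.cast_partialSups, ← hmax]
  rfl

end Probability

theorem skip_free_ascending_ballot_general
    {Ω : Type*} [MeasurableSpace Ω] (μ : Measure Ω) [IsProbabilityMeasure μ]
    (X : ℕ → Ω → ℤ) (hmeas : ∀ i, Measurable (X i))
    (hindep : iIndepFun X μ)
    (hident : ∀ i, IdentDistrib (X i) (X 0) μ μ)
    (hskip : ∀ᵐ ω ∂μ, X 0 ω ≤ 1)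
    (hint : Integrable (fun ω => (X 0 ω : ℝ)) μ)
    (hdrift : 0 < ∫ ω, (X 0 ω : ℝ) ∂μ) :
    (μ {ω | ∀ n : ℕ, 1 ≤ n → 0 < ∑ i ∈ Finset.range n, X i ω}).toReal
      = ∫ ω, (X 0 ω : ℝ) ∂μ := by
  have hbound (N : ℕ) : ∀ᵐ ω ∂μ,
      ‖(ladderCount (fun k => ∑ i ∈ range k, X i ω) N : ℝ) / N‖ ≤ 1 := ae_of_all _ fun ω => by
    rw [Real.norm_of_nonneg (by positivity)]
    exact div_le_one_of_le₀ (by exact_mod_cast ladderCount_le _ N) N.cast_nonneg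
  have hlim := tendsto_integral_of_dominated_convergence (fun _ => 1)
    (fun N => ((measurable_from_nat.comp (measurable_ladderCount hmeas N)).div_const _)
      |>.aestronglyMeasurable)
    (integrable_const 1) hbound (ae_tendsto_ladderCount_div hindep hident hskip hint hdrift.le)
  rw [integral_const, probReal_univ, one_smul] at hlim
  exact tendsto_nhds_unique (tendsto_integral_ladderCount_div hmeas hindep hident) hlim

/-- Ballot-type identity: for a skip-free ascending random walk `S_n = Σ_{i<n} X_i`
with i.i.d. increments, `P(X_1 = 1) > 0`, no jumps `≥ 2`, integrable increments and
positive drift, the probability of never hitting `(-∞,0]` after time `0` equals the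
drift `E[X_1]`. -/
theorem skip_free_ascending_ballot
    {Ω : Type*} [MeasurableSpace Ω] (μ : Measure Ω) [IsProbabilityMeasure μ]
    (X : ℕ → Ω → ℤ) (hmeas : ∀ i, Measurable (X i))
    (hindep : iIndepFun X μ)
    (hident : ∀ i, IdentDistrib (X i) (X 0) μ μ)
    (hpos : 0 < μ {ω | X 0 ω = 1})
    (hskip : ∀ᵐ ω ∂μ, X 0 ω ≤ 1)
    (hint : Integrable (fun ω => (X 0 ω : ℝ)) μ)
    (hdrift : 0 < ∫ ω, (X 0 ω : ℝ) ∂μ) :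
    (μ {ω | ∀ n : ℕ, 1 ≤ n → 0 < ∑ i ∈ Finset.range n, X i ω}).toReal
      = ∫ ω, (X 0 ω : ℝ) ∂μ :=
  skip_free_ascending_ballot_general μ X hmeas hindep hident hskip hint hdrift
end
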